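/- There is a one-to-one correspondence between Ψ-runs and BWT runs: for each symbol c, the p-th maximal run of consecutive values within Ψ_c (the restriction of Ψ to suffix-array positions whose suffixes start with c) corresponds to the p-th maximal BWT run of symbol c; in particular the image under Ψ of each Ψ-run of Ψ_c is exactly an interval of BWT positions all holding symbol c maximal among such intervals, and hence r = Σ_c r_c, where r_c is the number of Ψ-runs in Ψ_c. -/

import Mathlib

/-- The suffix of `T` starting at position `i` (0-based), as a list. -/
def sufList {n : ℕ} (T : Fin (n+1) → ℕ) (i : Fin (n+1)) : List ℕ :=
  (List.ofFn T).drop i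

/-- `SA` is the suffix array of `T`: it lists suffixes in increasing lexicographic order. -/
def IsSA {n : ℕ} (T : Fin (n+1) → ℕ) (SA : Equiv.Perm (Fin (n+1))) : Prop :=
  ∀ i j : Fin (n+1), i < j → List.Lex (· < ·) (sufList T (SA i)) (sufList T (SA j))

/-- The last symbol of `T` is a unique terminator, strictly smaller than every other symbol. -/
def Terminator {n : ℕ} (T : Fin (n+1) → ℕ) : Prop :=
  ∀ i : Fin (n+1), i ≠ Fin.last n → T (Fin.last n) < T i

/-- Ψ(i) = SA⁻¹[(SA[i] mod n) + 1] (0-based, circular via `Fin` addition). -/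
def psi {n : ℕ} (SA : Equiv.Perm (Fin (n+1))) (i : Fin (n+1)) : Fin (n+1) :=
  SA.symm (SA i + 1)

/-- BWT[j] = T[SA[j] - 1] (circularly). -/
def bwt {n : ℕ} (T : Fin (n+1) → ℕ) (SA : Equiv.Perm (Fin (n+1))) (j : Fin (n+1)) : ℕ :=
  T (SA j - 1)

/-- LF(i): the suffix-array position of SA[i] − 1 (circularly). -/
def lf {n : ℕ} (SA : Equiv.Perm (Fin (n+1))) (i : Fin (n+1)) : Fin (n+1) :=
  SA.symm (SA i - 1)

/-- C[c]: the number of characters of `T` smaller than `c`. -/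
def cnt {n : ℕ} (T : Fin (n+1) → ℕ) (c : ℕ) : ℕ :=
  (Finset.univ.filter fun i : Fin (n+1) => T i < c).card

/-- rank_c(f, i): number of occurrences of `c` in `f` at positions ≤ i (inclusive rank). -/
def rankIncl {n : ℕ} (f : Fin (n+1) → ℕ) (c : ℕ) (i : Fin (n+1)) : ℕ :=
  (Finset.univ.filter fun j : Fin (n+1) => j ≤ i ∧ f j = c).card

/-- number of occurrences of `c` strictly before position `i`. -/
def rankBefore {n : ℕ} (f : Fin (n+1) → ℕ) (c : ℕ) (i : Fin (n+1)) : ℕ :=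
  (Finset.univ.filter fun j : Fin (n+1) => j < i ∧ f j = c).card

/-- LF via the counting formula, as a natural number (0-based). -/
def lfCount {n : ℕ} (T : Fin (n+1) → ℕ) (SA : Equiv.Perm (Fin (n+1))) (i : Fin (n+1)) : ℕ :=
  cnt T (bwt T SA i) + rankIncl (bwt T SA) (bwt T SA i) i - 1

/-- Position `j` is not the last element of its Ψ-run. -/
def NotLastInRun {n : ℕ} (T : Fin (n+1) → ℕ) (SA : Equiv.Perm (Fin (n+1)))
    (j : Fin (n+1)) : Prop :=
  j.val < n ∧ T (SA j) = T (SA (j+1)) ∧ ((psi SA (j+1) : ℕ) = (psi SA j : ℕ) + 1)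

/-- `j` starts a Ψ-run (a run of consecutive Ψ-values within one character class). -/
def PsiRunHead {n : ℕ} (T : Fin (n+1) → ℕ) (SA : Equiv.Perm (Fin (n+1)))
    (j : Fin (n+1)) : Prop :=
  j = 0 ∨ T (SA (j-1)) ≠ T (SA j) ∨ (psi SA j : ℕ) ≠ (psi SA (j-1) : ℕ) + 1

/-- `j` starts a BWT run. -/
def BwtRunHead {n : ℕ} (T : Fin (n+1) → ℕ) (SA : Equiv.Perm (Fin (n+1)))
    (j : Fin (n+1)) : Prop :=
  j = 0 ∨ bwt T SA j ≠ bwt T SA (j-1)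

attribute [local instance] Classical.propDecidable

/-! Ψ maps the class of `c` (the SA positions whose suffix starts with `c`) bijectively onto the
BWT positions holding `c`, since `BWT[Ψ(i)] = T[SA[i]]`; by the sorting of suffixes this class is
an interval on which Ψ is increasing. So `i - 1, i` in the class have consecutive Ψ-values exactly
when the BWT position just before `Ψ(i)` also holds `c`, i.e. Ψ sends the Ψ-run heads of the class
of `c` bijectively onto the BWT-run heads of `c`. -/

theorem Fin.covBy_iff_eq_sub_one {n : ℕ} {i j : Fin (n+1)} : i ⋖ j ↔ j ≠ 0 ∧ i = j - 1 := by
  rw [Fin.covBy_iff, Nat.covBy_iff_add_one_eq]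
  by_cases hj : j = 0
  · subst hj
    simp
  · have hj' : (j : ℕ) ≠ 0 := Fin.val_ne_iff.mpr hj
    rw [Fin.ext_iff, Fin.coe_sub_one, if_neg hj]
    omega

theorem Fin.exists_covBy_and_iff {n : ℕ} {j : Fin (n+1)} {p : Fin (n+1) → Prop} :
    (∃ i, i ⋖ j ∧ p i) ↔ j ≠ 0 ∧ p (j - 1) := by
  simp only [Fin.covBy_iff_eq_sub_one]
  constructor
  · rintro ⟨i, ⟨hj, rfl⟩, hp⟩
    exact ⟨hj, hp⟩
  · rintro ⟨hj, hp⟩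
    exact ⟨j - 1, ⟨hj, rfl⟩, hp⟩

theorem StrictMonoOn.covBy_of_apply_covBy {α β : Type*} [LinearOrder α] [Preorder β]
    {f : α → β} {s : Set α} (hs : s.OrdConnected) (hf : StrictMonoOn f s) {a b : α}
    (ha : a ∈ s) (hb : b ∈ s) (h : f a ⋖ f b) : a ⋖ b := by
  have hab : a < b := (hf.lt_iff_lt ha hb).mp h.lt
  refine ⟨hab, fun c hac hcb => ?_⟩
  have hc : c ∈ s := hs.out ha hb ⟨hac.le, hcb.le⟩
  exact h.2 (hf ha hc hac) (hf hc hb hcb)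

section SuffixArray

variable {n : ℕ} {T : Fin (n+1) → ℕ} {SA : Equiv.Perm (Fin (n+1))}

theorem sufList_eq_cons_drop (T : Fin (n+1) → ℕ) (i : Fin (n+1)) :
    sufList T i = T i :: (List.ofFn T).drop (i + 1 : ℕ) := by
  rw [sufList, List.drop_eq_getElem_cons (by simpa using i.isLt), List.getElem_ofFn]

theorem sufList_eq_cons (T : Fin (n+1) → ℕ) {i : Fin (n+1)} (hi : i ≠ Fin.last n) :
    sufList T i = T i :: sufList T (i + 1) := by
  rw [sufList_eq_cons_drop, sufList, Fin.val_add_one_of_lt (Fin.lt_last_iff_ne_last.mpr hi)]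

theorem Terminator.ne_last (hT : Terminator T) {i j : Fin (n+1)} (hij : i ≠ j)
    (h : T i = T j) : i ≠ Fin.last n := by
  rintro rfl
  exact (hT j hij.symm).ne h

theorem IsSA.lt_of_lex (hSA : IsSA T SA) {i j : Fin (n+1)}
    (h : List.Lex (· < ·) (sufList T (SA i)) (sufList T (SA j))) : i < j := by
  rcases lt_trichotomy i j with hij | rfl | hji
  · exact hij
  · exact absurd h (Std.Asymm.asymm _ _ h)
  · exact absurd (hSA j i hji) (Std.Asymm.asymm _ _ h)

theorem IsSA.monotone_char (hSA : IsSA T SA) : Monotone fun i => T (SA i) := by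
  refine fun i j hij => hij.eq_or_lt.elim (fun h => h ▸ le_rfl) fun hlt => ?_
  have h := hSA i j hlt
  rw [sufList_eq_cons_drop T (SA i), sufList_eq_cons_drop T (SA j), List.cons_lex_cons_iff] at h
  exact h.elim le_of_lt fun h => h.1.le

theorem IsSA.ordConnected_charClass (hSA : IsSA T SA) (c : ℕ) :
    {i | T (SA i) = c}.OrdConnected :=
  Set.ordConnected_singleton.preimage_mono hSA.monotone_char

theorem IsSA.strictMonoOn_psi (hSA : IsSA T SA) (hT : Terminator T) (c : ℕ) :
    StrictMonoOn (psi SA) {i | T (SA i) = c} := by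
  intro i (hi : T (SA i) = c) j (hj : T (SA j) = c) hij
  have hc : T (SA i) = T (SA j) := hi.trans hj.symm
  have h := hSA i j hij
  rw [sufList_eq_cons T (hT.ne_last (SA.injective.ne hij.ne) hc),
    sufList_eq_cons T (hT.ne_last (SA.injective.ne hij.ne') hc.symm),
    List.cons_lex_cons_iff] at h
  rcases h with hlt | ⟨-, h⟩
  · exact absurd hc hlt.ne
  · rw [← SA.apply_symm_apply (SA i + 1), ← SA.apply_symm_apply (SA j + 1)] at h
    exact hSA.lt_of_lex h

end SuffixArray

section Psi

variable {n : ℕ} (T : Fin (n+1) → ℕ) (SA : Equiv.Perm (Fin (n+1)))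

theorem psi_lf (i : Fin (n+1)) : psi SA (lf SA i) = i := by
  simp [psi, lf]

theorem lf_psi (i : Fin (n+1)) : lf SA (psi SA i) = i := by
  simp [psi, lf]

theorem psi_bijective : Function.Bijective (psi SA) :=
  ⟨Function.LeftInverse.injective (lf_psi SA),
    Function.RightInverse.surjective (psi_lf SA)⟩

theorem bwt_psi (i : Fin (n+1)) : bwt T SA (psi SA i) = T (SA i) := by
  simp [bwt, psi]

theorem not_psiRunHead_iff (j : Fin (n+1)) :
    ¬ PsiRunHead T SA j ↔ ∃ i, i ⋖ j ∧ T (SA i) = T (SA j) ∧ psi SA i ⋖ psi SA j := by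
  rw [Fin.exists_covBy_and_iff, Fin.covBy_iff, Nat.covBy_iff_add_one_eq, PsiRunHead]
  push Not
  exact ⟨fun ⟨hj, hc, hp⟩ => ⟨hj, hc, hp.symm⟩, fun ⟨hj, hc, hp⟩ => ⟨hj, hc, hp.symm⟩⟩

theorem not_bwtRunHead_iff (j : Fin (n+1)) :
    ¬ BwtRunHead T SA j ↔ ∃ i, i ⋖ j ∧ bwt T SA i = bwt T SA j := by
  rw [Fin.exists_covBy_and_iff, BwtRunHead]
  push Not
  exact and_congr_right fun _ => eq_comm

variable {T SA}

theorem psiRunHead_iff_bwtRunHead_psi (hSA : IsSA T SA) (hT : Terminator T) (j : Fin (n+1)) :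
    PsiRunHead T SA j ↔ BwtRunHead T SA (psi SA j) := by
  rw [← not_iff_not, not_psiRunHead_iff, not_bwtRunHead_iff]
  constructor
  · rintro ⟨i, -, hc, hcov⟩
    exact ⟨psi SA i, hcov, by rw [bwt_psi, bwt_psi, hc]⟩
  · rintro ⟨i', hcov, hc⟩
    obtain ⟨i, rfl⟩ := (psi_bijective SA).surjective i'
    rw [bwt_psi, bwt_psi] at hc
    have hcovBy : i ⋖ j := (hSA.strictMonoOn_psi hT _).covBy_of_apply_covBy
      (hSA.ordConnected_charClass _) hc rfl hcov
    exact ⟨i, hcovBy, hc, hcov⟩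

theorem card_psiRunHead_eq_card_bwtRunHead (hSA : IsSA T SA) (hT : Terminator T) (c : ℕ) :
    (Finset.univ.filter fun j => PsiRunHead T SA j ∧ T (SA j) = c).card =
      (Finset.univ.filter fun j => BwtRunHead T SA j ∧ bwt T SA j = c).card :=
  Finset.card_bijective (psi SA) (psi_bijective SA) fun j => by
    simp only [Finset.mem_filter, Finset.mem_univ, true_and,
      psiRunHead_iff_bwtRunHead_psi hSA hT, bwt_psi]

end Psi

/-- for each symbol c, the number r_c of Ψ-runs inside the character class
of c equals the number of BWT runs of symbol c; hence r = Σ_c r_c. -/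
theorem psi_runs_eq_bwt_runs {n : ℕ} (T : Fin (n+1) → ℕ) (SA : Equiv.Perm (Fin (n+1)))
    (hSA : IsSA T SA) (hT : Terminator T) :
    (∀ c : ℕ,
      (Finset.univ.filter fun j : Fin (n+1) => PsiRunHead T SA j ∧ T (SA j) = c).card =
      (Finset.univ.filter fun j : Fin (n+1) => BwtRunHead T SA j ∧ bwt T SA j = c).card) ∧
    (Finset.univ.filter fun j : Fin (n+1) => BwtRunHead T SA j).card =
      ∑ c ∈ Finset.univ.image T,
        (Finset.univ.filter fun j : Fin (n+1) => PsiRunHead T SA j ∧ T (SA j) = c).card := by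
  refine ⟨card_psiRunHead_eq_card_bwtRunHead hSA hT, ?_⟩
  have hbwt : ∀ j ∈ Finset.univ.filter (BwtRunHead T SA), bwt T SA j ∈ Finset.univ.image T :=
    fun j _ => Finset.mem_image_of_mem T (Finset.mem_univ _)
  rw [Finset.card_eq_sum_card_fiberwise hbwt]
  refine Finset.sum_congr rfl fun c _ => ?_
  rw [card_psiRunHead_eq_card_bwtRunHead hSA hT, Finset.filter_filter]
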